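/- Let Ω be a convex region in a Riemannian surface M (each boundary component is convex to Ω) and let γ be a closed curve contained in the closure of Ω. Then every curve in the homotopy produced by applying the Birkhoff curve shortening process to γ remains in the closure of Ω. -/
import Mathlib


open Set MeasureTheory Filter

/-- A unit-speed minimizing geodesic on a parameter set. -/
def IsMinGeodesicOn {M : Type*} [MetricSpace M] (γ : ℝ → M) (s : Set ℝ) : Prop :=
  ∀ u ∈ s, ∀ v ∈ s, dist (γ u) (γ v) = |u - v|

/-- A unit-speed geodesic loop `γ : [0,L] → M` based at `p` (geodesic in the interior). -/
def IsGeodesicLoop {M : Type*} [MetricSpace M] (γ : ℝ → M) (L : ℝ) (p : M) : Prop :=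
  0 < L ∧ ContinuousOn γ (Set.Icc 0 L) ∧ γ 0 = p ∧ γ L = p ∧
    ∀ t ∈ Set.Ioo 0 L, ∃ ε > 0, ∀ u ∈ Set.Icc 0 L, ∀ v ∈ Set.Icc 0 L,
      |u - t| < ε → |v - t| < ε → dist (γ u) (γ v) = |u - v|

/-- A (nonconstant, unit-speed) closed geodesic of length `L`: an `L`-periodic curve that is
locally an isometric embedding of `ℝ`. -/
def IsClosedGeodesic {M : Type*} [MetricSpace M] (γ : ℝ → M) (L : ℝ) : Prop :=
  0 < L ∧ (∀ t, γ (t + L) = γ t) ∧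
    ∀ t : ℝ, ∃ ε > 0, ∀ u v : ℝ, |u - t| < ε → |v - t| < ε →
      dist (γ u) (γ v) = |u - v|

/-- The loop `γ : [0,L] → M` (with `γ 0 = γ L`) is freely null-homotopic within `S`. -/
def NullHomotopicIn {M : Type*} [TopologicalSpace M] (γ : ℝ → M) (L : ℝ) (S : Set M) : Prop :=
  ∃ H : ℝ × ℝ → M, ContinuousOn H (Set.Icc 0 1 ×ˢ Set.Icc 0 L) ∧
    (∀ t ∈ Set.Icc 0 L, H (0, t) = γ t) ∧
    (∃ c, ∀ t ∈ Set.Icc 0 L, H (1, t) = c) ∧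
    (∀ s ∈ Set.Icc (0:ℝ) 1, H (s, 0) = H (s, L)) ∧
    (∀ q ∈ Set.Icc (0:ℝ) 1 ×ˢ Set.Icc 0 L, H q ∈ S)

/-- Length of the curve `γ : [0,L] → M` as total variation. -/
noncomputable def curveLength {M : Type*} [MetricSpace M] (γ : ℝ → M) (L : ℝ) : ℝ :=
  (eVariationOn γ (Set.Icc 0 L)).toReal

/-- `Ω` is convex with constant `ε`: minimizing geodesic segments between points of the closure
of `Ω` at distance `< ε` stay in the closure of `Ω`. -/
def ConvexRegion {M : Type*} [MetricSpace M] (Ω : Set M) (ε : ℝ) : Prop :=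
  0 < ε ∧ ∀ x ∈ closure Ω, ∀ y ∈ closure Ω, dist x y < ε →
    ∀ σ : ℝ → M, σ 0 = x → σ (dist x y) = y →
      IsMinGeodesicOn σ (Set.Icc 0 (dist x y)) →
      ∀ s ∈ Set.Icc 0 (dist x y), σ s ∈ closure Ω

/-- The loop `γ : [0,L] → M` bounds the region `Ω` and is convex to it. -/
def LoopConvexTo {M : Type*} [MetricSpace M] (γ : ℝ → M) (L : ℝ) (Ω : Set M) : Prop :=
  IsOpen Ω ∧ IsConnected Ω ∧ frontier Ω = γ '' Set.Icc 0 L ∧ ∃ ε, ConvexRegion Ω ε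

/-- `M` has `n` ends: it is homeomorphic to a compact surface with `n` punctures. -/
def HasNEnds (M : Type*) [TopologicalSpace M] (n : ℕ) : Prop :=
  ∃ (N : Type) (_ : TopologicalSpace N),
    Nonempty (ChartedSpace (EuclideanSpace ℝ (Fin 2)) N) ∧ CompactSpace N ∧
    ∃ F : Finset N, F.card = n ∧ Nonempty (M ≃ₜ ((↑F : Set N)ᶜ : Set N))

/-- curves produced from a closed curve in the closure of a convex region `Ω`
by iterating Birkhoff curve-shortening steps (each point of the new curve lies on a minimizing
geodesic segment between two points of the old curve at distance below the convexity constant)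
remain in the closure of `Ω`. -/
theorem stmt14 {M : Type*} [MetricSpace M]
    [ChartedSpace (EuclideanSpace ℝ (Fin 2)) M]
    (Ω : Set M) (ε : ℝ) (hΩ : ConvexRegion Ω ε)
    (γ : ℕ → ℝ → M)
    (h0cont : ContinuousOn (γ 0) (Set.Icc 0 1)) (h0closed : γ 0 0 = γ 0 1)
    (h0 : ∀ t ∈ Set.Icc (0:ℝ) 1, γ 0 t ∈ closure Ω)
    (hstep : ∀ n, ∀ t ∈ Set.Icc (0:ℝ) 1,
      ∃ a ∈ Set.Icc (0:ℝ) 1, ∃ b ∈ Set.Icc (0:ℝ) 1,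
        dist (γ n a) (γ n b) < ε ∧
        ∃ σ : ℝ → M, σ 0 = γ n a ∧ σ (dist (γ n a) (γ n b)) = γ n b ∧
          IsMinGeodesicOn σ (Set.Icc 0 (dist (γ n a) (γ n b))) ∧
          γ (n + 1) t ∈ σ '' Set.Icc 0 (dist (γ n a) (γ n b))) :
    ∀ n, ∀ t ∈ Set.Icc (0:ℝ) 1, γ n t ∈ closure Ω := by
  intro n
  induction n with
  | zero => exact h0
  | succ n ih =>
    intro t ht
    obtain ⟨a, ha, b, hb, hd, σ, hσ0, hσd, hmin, hmem⟩ := hstep n t ht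
    obtain ⟨s, hs, hst⟩ := hmem
    rw [← hst]
    exact hΩ.2 _ (ih a ha) _ (ih b hb) hd σ hσ0 hσd hmin s hs
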